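/- arXiv:1508.04084 — 2 statements merged into one kernel-verified Lean document; each statement's English description precedes it below -/
import Mathlib

section
/- For every nonnegative integer n, ∑_{j=0}^n C(n,j) E_{j+1}(0)/(j+1) = -(E_{n+1}(0) + 1)/(n+1). -/
/-- The `n`-th Euler polynomial `E_n(x)`, characterized by the generating function
`2 e^{xz}/(e^z+1) = ∑ E_n(x) z^n/n!`; given by the standard closed form
`E_n(x) = (2^{n+1}/(n+1)) (B_{n+1}((x+1)/2) - B_{n+1}(x/2))` in terms of
Bernoulli polynomials. -/
noncomputable def eulerPoly (n : ℕ) (x : ℝ) : ℝ :=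
  2 ^ (n + 1) / (n + 1) *
    (((Polynomial.bernoulli (n + 1)).map (algebraMap ℚ ℝ)).eval ((x + 1) / 2) -
     ((Polynomial.bernoulli (n + 1)).map (algebraMap ℚ ℝ)).eval (x / 2))

/-!
Multiplying by `n + 1` and using `(n + 1) C(n, j) = C(n + 1, j + 1) (j + 1)` and `E_0 = 1`, the
claim becomes `∑_{k ≤ m} C(m, k) E_k(0) = -E_m(0)` for `m = n + 1`. The left side is `E_m(1)` by
the Appell identity `E_m(x + y) = ∑_k C(m, k) E_k(x) y^(m-k)`, which the Euler polynomials inherit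
from the Bernoulli polynomials, whose Hasse derivatives are `C(n, k) B_{n-k}` (Taylor expansion).
The right side is `E_m(1)` too, by `E_m(x + 1) + E_m(x) = 2 x^m` at `x = 0`; this is the difference
equation `B_{m+1}(1 + t) - B_{m+1}(t) = (m + 1) t^m` at `t = x / 2`.
-/

open Polynomial Finset

namespace Polynomial

variable {R S : Type*} [CommSemiring R] [CommSemiring S]

theorem hasseDeriv_map (f : R →+* S) (k : ℕ) (p : R[X]) :
    hasseDeriv k (p.map f) = (hasseDeriv k p).map f := by
  ext n
  simp [hasseDeriv_coeff]

theorem eval_add_eq_sum_range_hasseDeriv {p : R[X]} {N : ℕ} (hp : p.natDegree < N) (x y : R) :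
    p.eval (x + y) = ∑ k ∈ range N, (hasseDeriv k p).eval x * y ^ k := by
  rw [add_comm, ← taylor_eval, eval_eq_sum_range' (by rwa [natDegree_taylor])]
  simp only [taylor_coeff]

theorem natDegree_bernoulli_le (n : ℕ) : (bernoulli n).natDegree ≤ n :=
  natDegree_le_iff_coeff_eq_zero.mpr fun i hi => by
    simp [coeff_bernoulli, not_le.mpr hi]

theorem hasseDeriv_bernoulli (k n : ℕ) :
    hasseDeriv k (bernoulli n) = n.choose k • bernoulli (n - k) := by
  ext j
  rw [hasseDeriv_coeff, coeff_smul, coeff_bernoulli, coeff_bernoulli]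
  by_cases h : j + k ≤ n
  · have hchoose : (n.choose (j + k) * (j + k).choose k : ℚ) = n.choose k * (n - k).choose j := by
      have := Nat.choose_mul (n := n) (Nat.le_add_left k j)
      rw [Nat.add_sub_cancel] at this
      exact_mod_cast this
    rw [if_pos h, if_pos (by omega), nsmul_eq_mul, Nat.sub_sub, add_comm k j]
    linear_combination _root_.bernoulli (n - (j + k)) * hchoose
  · rcases le_or_gt k n with hk | hk
    · simp [h, show ¬j ≤ n - k by omega]
    · simp [h, Nat.choose_eq_zero_of_lt hk]

variable {A : Type*} [CommRing A] [Algebra ℚ A]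

theorem bernoulli_aeval_add (n : ℕ) (x y : A) :
    aeval (x + y) (bernoulli n) =
      ∑ k ∈ range (n + 1), n.choose k * aeval x (bernoulli k) * y ^ (n - k) := by
  have hdeg : ((bernoulli n).map (algebraMap ℚ A)).natDegree < n + 1 :=
    natDegree_map_le.trans_lt (Nat.lt_succ_of_le (natDegree_bernoulli_le n))
  rw [← eval_map_algebraMap, eval_add_eq_sum_range_hasseDeriv hdeg, ← sum_range_reflect]
  refine sum_congr rfl fun k hk => ?_
  have hk : k ≤ n := Nat.lt_succ_iff.mp (mem_range.mp hk)
  rw [hasseDeriv_map, hasseDeriv_bernoulli, add_tsub_cancel_right, Nat.sub_sub_self hk,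
    Nat.choose_symm hk, eval_map_algebraMap, map_nsmul, nsmul_eq_mul]

theorem bernoulli_aeval_one_add (n : ℕ) (x : A) :
    aeval (1 + x) (bernoulli n) = aeval x (bernoulli n) + n * x ^ (n - 1) := by
  simpa [aeval_comp, add_comm] using congr(aeval x $(bernoulli_comp_one_add_X n))

end Polynomial

theorem cast_choose_div_add_one {K : Type*} [Field K] [CharZero K] (n j : ℕ) :
    (n.choose j : K) / (j + 1) = (n + 1).choose (j + 1) / (n + 1) := by
  rw [div_eq_div_iff (Nat.cast_add_one_ne_zero j) (Nat.cast_add_one_ne_zero n)]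
  exact_mod_cast (mul_comm _ _).trans (Nat.add_one_mul_choose_eq n j)

theorem eulerPoly_eq_aeval (n : ℕ) (x : ℝ) :
    eulerPoly n x = 2 ^ (n + 1) / (n + 1) *
      (aeval ((x + 1) / 2) (bernoulli (n + 1)) - aeval (x / 2) (bernoulli (n + 1))) := by
  simp only [eulerPoly, eval_map_algebraMap]

theorem eulerPoly_zero (x : ℝ) : eulerPoly 0 x = 1 := by
  rw [eulerPoly_eq_aeval, Polynomial.bernoulli_one]
  simp only [map_sub, aeval_X, aeval_C]
  ring

theorem eulerPoly_add_one_add_self (n : ℕ) (x : ℝ) :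
    eulerPoly n (x + 1) + eulerPoly n x = 2 * x ^ n := by
  rw [eulerPoly_eq_aeval, eulerPoly_eq_aeval, show (x + 1 + 1) / 2 = 1 + x / 2 by ring,
    bernoulli_aeval_one_add, div_pow]
  field_simp
  push_cast
  ring

theorem eulerPoly_add (n : ℕ) (x y : ℝ) :
    eulerPoly n (x + y) = ∑ k ∈ range (n + 1), n.choose k * eulerPoly k x * y ^ (n - k) := by
  rw [eulerPoly_eq_aeval, show (x + y + 1) / 2 = (x + 1) / 2 + y / 2 by ring,
    show (x + y) / 2 = x / 2 + y / 2 by ring, bernoulli_aeval_add, bernoulli_aeval_add,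
    ← sum_sub_distrib, sum_range_succ', Polynomial.bernoulli_zero]
  simp only [map_one, sub_self, add_zero, mul_sum]
  refine sum_congr rfl fun j hj => ?_
  have hj : j ≤ n := Nat.lt_succ_iff.mp (mem_range.mp hj)
  have hchoose : ((n : ℝ) + 1) * n.choose j = (n + 1).choose (j + 1) * (j + 1) := by
    exact_mod_cast Nat.add_one_mul_choose_eq n j
  have hpow : (2 : ℝ) ^ (n + 1) = 2 ^ (j + 1) * 2 ^ (n - j) := by
    rw [← pow_add]; congr 1; omega
  rw [eulerPoly_eq_aeval, Nat.add_sub_add_right, div_pow, hpow]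
  field_simp
  linear_combination (y ^ (n - j) * (aeval (x / 2) (bernoulli (j + 1)) -
    aeval ((x + 1) / 2) (bernoulli (j + 1)))) * hchoose

theorem eulerPoly_one {n : ℕ} (hn : n ≠ 0) : eulerPoly n 1 = -eulerPoly n 0 := by
  have h := eulerPoly_add_one_add_self n 0
  rw [zero_add, zero_pow hn, mul_zero] at h
  linarith

theorem sum_choose_mul_eulerPoly_zero (n : ℕ) :
    ∑ k ∈ range (n + 1), n.choose k * eulerPoly k 0 = eulerPoly n 1 := by
  simpa using (eulerPoly_add n 0 1).symm

theorem sum_choose_eulerPoly_zero (n : ℕ) :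
    ∑ j ∈ Finset.range (n + 1), (n.choose j : ℝ) * eulerPoly (j + 1) 0 / (j + 1) =
      -(eulerPoly (n + 1) 0 + 1) / (n + 1) := by
  have happell := sum_choose_mul_eulerPoly_zero (n + 1)
  rw [sum_range_succ', eulerPoly_zero, eulerPoly_one n.succ_ne_zero, Nat.choose_zero_right,
    Nat.cast_one, mul_one] at happell
  calc ∑ j ∈ range (n + 1), (n.choose j : ℝ) * eulerPoly (j + 1) 0 / (j + 1)
      = (∑ j ∈ range (n + 1), ((n + 1).choose (j + 1) : ℝ) * eulerPoly (j + 1) 0) / (n + 1) := by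
        rw [sum_div]
        refine sum_congr rfl fun j _ => ?_
        rw [mul_div_right_comm, cast_choose_div_add_one, div_mul_eq_mul_div]
    _ = -(eulerPoly (n + 1) 0 + 1) / (n + 1) := by
        rw [eq_sub_of_add_eq happell]
        ring
end

section
/- For every nonnegative integer m, ∫_0^1 E_{2m}(x) dx = (8(2m)! (-1)^m / π^{2m+2}) λ(2m+2), where λ(s) = ∑_{n=0}^∞ 1/(2n+1)^s. -/
open Real
open scoped Nat

theorem HasSum.odd_of_even {α : Type*} [AddCommGroup α] [UniformSpace α] [IsUniformAddGroup α]
    [CompleteSpace α] [T2Space α] {f : ℕ → α} {a b : α} (hf : HasSum f a)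
    (he : HasSum (fun k ↦ f (2 * k)) b) : HasSum (fun k ↦ f (2 * k + 1)) (a - b) := by
  obtain ⟨c, hc⟩ := hf.summable.comp_injective (i := fun k ↦ 2 * k + 1) fun _ _ h ↦ by lia
  rwa [hf.unique (he.even_add_odd hc), add_sub_cancel_left]

theorem hasSum_one_div_two_mul_add_one_pow {s : ℕ} {a : ℝ}
    (h : HasSum (fun n : ℕ ↦ 1 / (n : ℝ) ^ s) a) :
    HasSum (fun n : ℕ ↦ 1 / (2 * n + 1 : ℝ) ^ s) ((1 - 1 / 2 ^ s) * a) := by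
  have he : HasSum (fun k : ℕ ↦ 1 / ((2 * k : ℕ) : ℝ) ^ s) (1 / 2 ^ s * a) := by
    have h2 := h.mul_left (1 / 2 ^ s)
    simp only [one_div_mul_one_div, ← mul_pow] at h2
    exact_mod_cast h2
  have ho := h.odd_of_even he
  push_cast at ho
  rwa [sub_mul, one_mul]

theorem antideriv_eulerPoly (n : ℕ) (x : ℝ) :
    HasDerivAt (fun x ↦ 2 ^ (n + 2) / ((n + 1) * (n + 2)) *
      (bernoulliFun (n + 2) ((x + 1) / 2) - bernoulliFun (n + 2) (x / 2))) (eulerPoly n x) x := by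
  have hB (c : ℝ) : HasDerivAt (fun x ↦ bernoulliFun (n + 2) ((x + c) / 2))
      ((n + 2) * bernoulliFun (n + 1) ((x + c) / 2) / 2) x := by
    refine ((hasDerivAt_bernoulliFun (n + 2) _).comp x
      (((hasDerivAt_id' x).add_const c).div_const 2)).congr_deriv ?_
    push_cast
    ring
  have hB0 := hB 0
  simp only [add_zero] at hB0
  refine (((hB 1).sub hB0).const_mul _).congr_deriv ?_
  show _ = 2 ^ (n + 1) / (n + 1) * (bernoulliFun (n + 1) _ - bernoulliFun (n + 1) _)
  field_simp
  ring

theorem continuous_eulerPoly (n : ℕ) : Continuous (eulerPoly n) := by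
  unfold eulerPoly
  fun_prop

theorem integral_eulerPoly (n : ℕ) :
    ∫ x in (0 : ℝ)..1, eulerPoly n x =
      4 * (2 ^ (n + 2) - 1) * bernoulli (n + 2) / ((n + 1) * (n + 2)) := by
  rw [intervalIntegral.integral_eq_sub_of_hasDerivAt (fun x _ ↦ antideriv_eulerPoly n x)
    ((continuous_eulerPoly n).intervalIntegrable 0 1)]
  rw [show ((1 : ℝ) + 1) / 2 = 1 by norm_num, show (1 : ℝ) / 2 = 2⁻¹ by norm_num,
    show ((0 : ℝ) + 1) / 2 = 2⁻¹ by norm_num, zero_div, bernoulliFun_eval_one,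
    bernoulliFun_eval_half, bernoulliFun_eval_zero, if_neg (by lia)]
  field_simp
  ring

theorem integral_eulerPoly_even (m : ℕ) :
    ∫ x in (0:ℝ)..1, eulerPoly (2 * m) x =
      8 * (2 * m).factorial * (-1 : ℝ) ^ m / Real.pi ^ (2 * m + 2) *
        ∑' n : ℕ, (1 : ℝ) / (2 * n + 1) ^ (2 * m + 2) := by
  have hodd := hasSum_one_div_two_mul_add_one_pow (hasSum_zeta_nat m.succ_ne_zero)
  rw [show 2 * (m + 1) - 1 = 2 * m + 1 by lia, show 2 * (m + 1) = 2 * m + 2 by lia,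
    show (-1 : ℝ) ^ (m + 1 + 1) = ((-1) ^ m)⁻¹ by rw [← inv_pow, inv_neg_one]; ring] at hodd
  rw [integral_eulerPoly, hodd.tsum_eq, Nat.factorial_succ, Nat.factorial_succ]
  push_cast
  field_simp
  ring
end
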